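/- Let Y₁,…,Y_n be i.i.d. real random variables, let φ_ε : ℝ → ℂ be continuous and nowhere vanishing, let K : ℝ → ℝ be integrable with Fourier transform φ_K, let h > 0, and assume t ↦ t·φ_K(th)/φ_ε(t) is integrable. Define D̂(x) = (2π)⁻¹ ∫_ℝ (−it) exp(−itx) φ_K(th) φ̂_Y(t)/φ_ε(t) dt (the derivative of the deconvolution density estimator). Then E[ sup_{x ∈ ℝ} |D̂(x) − E D̂(x)|² ] ≤ (2π)⁻² n⁻¹ ( ∫_ℝ |t| · |φ_K(th)|/|φ_ε(t)| dt )². -/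

import Mathlib

/-!
Write `a t = |t| ‖φK (t h)‖ / ‖φε t‖` and `Δ ω t = φ̂_Y(t) - φ_Y(t)`. Since `D̂ - E D̂` is the
same Fourier-type integral applied to `Δ`, uniformly in `x` we have
`‖D̂ ω x - E D̂ x‖ ≤ (2π)⁻¹ ∫ a t ‖Δ ω t‖ dt`. The square of the right-hand integral is a double
integral over `(s, t)`; exchanging it with the expectation and bounding
`E[‖Δ s‖ ‖Δ t‖] ≤ (E‖Δ s‖² + E‖Δ t‖²) / 2` reduces everything to `E‖Δ t‖² ≤ n⁻¹`, which holds
because the real and imaginary parts of `φ̂_Y(t)` are averages of `n` independent copies of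
`cos (t Y)` and `sin (t Y)`, whose variances add up to at most `E[cos² + sin²] = 1`.
-/

open MeasureTheory ProbabilityTheory Complex Function

section Average

variable {Ω : Type*} {mΩ : MeasurableSpace Ω} {μ : Measure Ω} [IsProbabilityMeasure μ] {n : ℕ}

lemma integral_sq_average_sub_eq {X : Fin n → Ω → ℝ} (hX : ∀ i, MemLp (X i) 2 μ)
    (hindep : Pairwise fun i j => X i ⟂ᵢ[μ] X j) :
    ∫ ω, ((n : ℝ)⁻¹ * ∑ i, X i ω - (n : ℝ)⁻¹ * ∑ i, μ[X i]) ^ 2 ∂μ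
      = ((n : ℝ) ^ 2)⁻¹ * ∑ i, variance (X i) μ := by
  have hS : MemLp (∑ i, X i) 2 μ := memLp_finsetSum' _ fun i _ => hX i
  have hmean : μ[(n : ℝ)⁻¹ • ∑ i, X i] = (n : ℝ)⁻¹ * ∑ i, μ[X i] := by
    simp only [Pi.smul_apply, Finset.sum_apply, smul_eq_mul]
    rw [integral_const_mul, integral_finsetSum _ fun i _ => (hX i).integrable one_le_two]
  rw [← inv_pow, ← IndepFun.variance_sum (fun i _ => hX i) (fun i _ j _ hij => hindep hij),
    ← variance_smul, variance_eq_integral (hS.const_smul _).aemeasurable, hmean]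
  simp [Finset.sum_apply]

lemma integral_norm_sq_average_sub_le {Z : Fin n → Ω → ℂ} (hZ : ∀ i, Measurable (Z i))
    (hindep : Pairwise fun i j => Z i ⟂ᵢ[μ] Z j) {C : ℝ} (hC : ∀ i ω, ‖Z i ω‖ ≤ C) :
    ∫ ω, ‖(n : ℂ)⁻¹ * ∑ i, Z i ω - (n : ℂ)⁻¹ * ∑ i, μ[Z i]‖ ^ 2 ∂μ ≤ C ^ 2 / n := by
  have hZint : ∀ i, Integrable (Z i) μ := fun i =>
    .of_bound (hZ i).aestronglyMeasurable C (.of_forall (hC i))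
  have hLp : ∀ (f : ℂ →L[ℝ] ℝ) i, MemLp (fun ω => f (Z i ω)) 2 μ := fun f i =>
    .of_bound (f.measurable.comp (hZ i)).aestronglyMeasurable (‖f‖ * C)
      (.of_forall fun ω => (f.le_opNorm _).trans (by gcongr; exact hC i ω))
  have hcomp : ∀ f : ℂ →L[ℝ] ℝ, ∀ ω,
      f ((n : ℂ)⁻¹ * ∑ i, Z i ω - (n : ℂ)⁻¹ * ∑ i, μ[Z i])
        = (n : ℝ)⁻¹ * ∑ i, f (Z i ω) - (n : ℝ)⁻¹ * ∑ i, μ[fun ω => f (Z i ω)] := by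
    intro f ω
    simp only [← Complex.ofReal_natCast, ← Complex.ofReal_inv, ← Complex.real_smul, map_sub,
      map_smul, map_sum, smul_eq_mul, f.integral_comp_comm (hZint _)]
  have hcentered : ∀ f : ℂ →L[ℝ] ℝ, MemLp (fun ω => (n : ℝ)⁻¹ * ∑ i, f (Z i ω)
      - (n : ℝ)⁻¹ * ∑ i, μ[fun ω => f (Z i ω)]) 2 μ := fun f =>
    ((memLp_finsetSum _ fun i _ => hLp f i).const_mul _).sub (memLp_const _)
  have hsq : ∀ w : ℂ, ‖w‖ ^ 2 = Complex.reCLM w ^ 2 + Complex.imCLM w ^ 2 := fun w => by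
    rw [Complex.sq_norm, Complex.normSq_apply, Complex.reCLM_apply, Complex.imCLM_apply]; ring
  have hpart : ∀ f : ℂ →L[ℝ] ℝ,
      ∫ ω, ((n : ℝ)⁻¹ * ∑ i, f (Z i ω) - (n : ℝ)⁻¹ * ∑ i, μ[fun ω => f (Z i ω)]) ^ 2 ∂μ
        = ((n : ℝ) ^ 2)⁻¹ * ∑ i, variance (fun ω => f (Z i ω)) μ := fun f =>
    integral_sq_average_sub_eq (hLp f) fun i j hij => (hindep hij).comp f.measurable f.measurable
  have hvar : ∀ i, variance (fun ω => Complex.reCLM (Z i ω)) μ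
      + variance (fun ω => Complex.imCLM (Z i ω)) μ ≤ C ^ 2 := fun i => calc
    variance (fun ω => Complex.reCLM (Z i ω)) μ + variance (fun ω => Complex.imCLM (Z i ω)) μ
      ≤ μ[fun ω => Complex.reCLM (Z i ω) ^ 2] + μ[fun ω => Complex.imCLM (Z i ω) ^ 2] :=
      add_le_add (variance_le_expectation_sq (hLp _ i).1) (variance_le_expectation_sq (hLp _ i).1)
    _ = μ[fun ω => ‖Z i ω‖ ^ 2] := by
      simp only [hsq]; exact (integral_add (hLp _ i).integrable_sq (hLp _ i).integrable_sq).symm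
    _ ≤ ∫ _, C ^ 2 ∂μ :=
      integral_mono_of_nonneg (.of_forall fun ω => by positivity) (integrable_const _)
        (.of_forall fun ω => pow_le_pow_left₀ (norm_nonneg _) (hC i ω) 2)
    _ = C ^ 2 := by simp
  calc ∫ ω, ‖(n : ℂ)⁻¹ * ∑ i, Z i ω - (n : ℂ)⁻¹ * ∑ i, μ[Z i]‖ ^ 2 ∂μ
      = ((n : ℝ) ^ 2)⁻¹ * ∑ i, (variance (fun ω => Complex.reCLM (Z i ω)) μ
          + variance (fun ω => Complex.imCLM (Z i ω)) μ) := by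
        simp only [hsq, hcomp]
        rw [integral_add (hcentered _).integrable_sq (hcentered _).integrable_sq, hpart, hpart,
          Finset.sum_add_distrib, mul_add]
    _ ≤ ((n : ℝ) ^ 2)⁻¹ * ∑ _i : Fin n, C ^ 2 := by gcongr with i; exact hvar i
    _ = C ^ 2 / n := by
      rcases eq_or_ne n 0 with rfl | hn
      · simp
      · rw [Finset.sum_const, Finset.card_univ, Fintype.card_fin, nsmul_eq_mul]; field_simp

end Average

section EmpiricalCharFun

variable {Ω : Type*} {mΩ : MeasurableSpace Ω} {μ : Measure Ω} [IsProbabilityMeasure μ] {n : ℕ}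
  {Y : Fin n → Ω → ℝ}

noncomputable def empiricalCharFun (Y : Fin n → Ω → ℝ) (ω : Ω) (t : ℝ) : ℂ :=
  (n : ℂ)⁻¹ * ∑ i, exp (I * t * Y i ω)

lemma norm_exp_I_mul_mul (t y : ℝ) : ‖exp (I * t * y)‖ = 1 := by
  rw [norm_exp]; simp

lemma norm_empiricalCharFun_le (Y : Fin n → Ω → ℝ) (ω : Ω) (t : ℝ) :
    ‖empiricalCharFun Y ω t‖ ≤ 1 := by
  rcases eq_or_ne n 0 with rfl | hn
  · simp [empiricalCharFun]
  calc ‖empiricalCharFun Y ω t‖ ≤ (n : ℝ)⁻¹ * ∑ i : Fin n, ‖exp (I * t * Y i ω)‖ := by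
        rw [empiricalCharFun, norm_mul, norm_inv, norm_natCast]; gcongr; exact norm_sum_le _ _
    _ = 1 := by simp [norm_exp_I_mul_mul, hn]

lemma measurable_uncurry_empiricalCharFun (hY : ∀ i, Measurable (Y i)) :
    Measurable (uncurry (empiricalCharFun Y)) := by
  unfold empiricalCharFun uncurry
  fun_prop

lemma integral_norm_sq_empiricalCharFun_sub_le (hY : ∀ i, Measurable (Y i))
    (hindep : iIndepFun Y μ) (hident : ∀ i j, IdentDistrib (Y i) (Y j) μ μ) (i₀ : Fin n) (t : ℝ) :
    ∫ ω, ‖empiricalCharFun Y ω t - ∫ ω', exp (I * t * Y i₀ ω') ∂μ‖ ^ 2 ∂μ ≤ (n : ℝ)⁻¹ := by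
  have hn : (n : ℂ) ≠ 0 := Nat.cast_ne_zero.mpr (Fin.pos i₀).ne'
  have hf : Measurable fun y : ℝ => exp (I * t * y) := by fun_prop
  have hmean : (n : ℂ)⁻¹ * ∑ i, ∫ ω, exp (I * t * Y i ω) ∂μ = ∫ ω, exp (I * t * Y i₀ ω) ∂μ := by
    have hident' : ∀ i, ∫ ω, exp (I * t * Y i ω) ∂μ = ∫ ω, exp (I * t * Y i₀ ω) ∂μ := fun i =>
      ((hident i i₀).comp hf).integral_eq
    simp only [hident', Finset.sum_const, Finset.card_univ, Fintype.card_fin, nsmul_eq_mul]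
    field_simp
  have := integral_norm_sq_average_sub_le (μ := μ) (Z := fun i ω => exp (I * t * Y i ω))
    (fun i => hf.comp (hY i)) (fun i j hij => (hindep.indepFun hij).comp hf hf) (C := 1)
    (fun i ω => (norm_exp_I_mul_mul _ _).le)
  rwa [hmean, one_pow, one_div] at this

lemma norm_integral_exp_I_mul_le (X : Ω → ℝ) (t : ℝ) : ‖∫ ω, exp (I * t * X ω) ∂μ‖ ≤ 1 := by
  simpa using norm_integral_le_of_norm_le_const (μ := μ)
    (.of_forall fun ω => (norm_exp_I_mul_mul t (X ω)).le)

lemma measurable_integral_exp_I_mul {X : Ω → ℝ} (hX : Measurable X) :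
    Measurable fun t : ℝ => ∫ ω, exp (I * t * X ω) ∂μ :=
  (Measurable.stronglyMeasurable (by fun_prop) :
    StronglyMeasurable fun p : ℝ × Ω => exp (I * p.1 * X p.2)).integral_prod_right'.measurable

end EmpiricalCharFun

lemma integral_mul_le_of_integral_sq_le {Ω : Type*} {mΩ : MeasurableSpace Ω} {μ : Measure Ω}
    {u v : Ω → ℝ} (hu : MemLp u 2 μ) (hv : MemLp v 2 μ) {c : ℝ}
    (hu2 : ∫ ω, u ω ^ 2 ∂μ ≤ c) (hv2 : ∫ ω, v ω ^ 2 ∂μ ≤ c) : ∫ ω, u ω * v ω ∂μ ≤ c := by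
  have hsum : Integrable (fun ω => u ω ^ 2 + v ω ^ 2) μ := hu.integrable_sq.add hv.integrable_sq
  calc ∫ ω, u ω * v ω ∂μ ≤ ∫ ω, (u ω ^ 2 + v ω ^ 2) / 2 ∂μ :=
        integral_mono (hu.integrable_mul hv) (hsum.div_const 2) fun ω => by
          nlinarith [sq_nonneg (u ω - v ω)]
    _ = ((∫ ω, u ω ^ 2 ∂μ) + ∫ ω, v ω ^ 2 ∂μ) / 2 := by
        rw [integral_div, integral_add hu.integrable_sq hv.integrable_sq]
    _ ≤ c := by linarith

section WeightedIntegral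

variable {Ω T : Type*} {mΩ : MeasurableSpace Ω} {mT : MeasurableSpace T} {μ : Measure Ω}
  [IsFiniteMeasure μ] {ν : Measure T} [SFinite ν] {a : T → ℝ} {D : Ω → T → ℝ} {M : ℝ}

lemma integrable_sq_integral_mul (ha : Integrable a ν) (hD : Measurable (uncurry D))
    (hDM : ∀ ω t, |D ω t| ≤ M) : Integrable (fun ω => (∫ t, a t * D ω t ∂ν) ^ 2) μ := by
  have hmeas : AEStronglyMeasurable (fun ω => ∫ t, a t * D ω t ∂ν) μ :=
    ((ha.1.comp_quasiMeasurePreserving Measure.quasiMeasurePreserving_snd).mul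
      hD.aestronglyMeasurable).integral_prod_right'
  refine .of_bound (hmeas.pow 2) ((M * ∫ t, ‖a t‖ ∂ν) ^ 2) (.of_forall fun ω => ?_)
  rw [norm_pow]
  refine pow_le_pow_left₀ (norm_nonneg _) ?_ 2
  refine (norm_integral_le_of_norm_le (ha.norm.const_mul M) (.of_forall fun t => ?_)).trans
    (integral_const_mul M _).le
  rw [norm_mul, mul_comm, Real.norm_eq_abs (D ω t)]
  exact mul_le_mul_of_nonneg_right (hDM ω t) (norm_nonneg _)

lemma integral_sq_integral_mul_le (ha : Integrable a ν) (ha0 : ∀ t, 0 ≤ a t)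
    (hD : Measurable (uncurry D)) (hDM : ∀ ω t, |D ω t| ≤ M) {c : ℝ}
    (hc : ∀ t, ∫ ω, D ω t ^ 2 ∂μ ≤ c) :
    ∫ ω, (∫ t, a t * D ω t ∂ν) ^ 2 ∂μ ≤ c * (∫ t, a t ∂ν) ^ 2 := by
  set F : Ω → T × T → ℝ := fun ω p => a p.1 * D ω p.1 * (a p.2 * D ω p.2)
  have hsq : ∀ ω, (∫ t, a t * D ω t ∂ν) ^ 2 = ∫ p, F ω p ∂ν.prod ν := fun ω => by
    rw [sq]; exact (integral_prod_mul (fun t => a t * D ω t) (fun t => a t * D ω t)).symm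
  have hD_slice : ∀ t, MemLp (fun ω => D ω t) 2 μ := fun t =>
    .of_bound (hD.comp (measurable_id.prodMk measurable_const)).aestronglyMeasurable M
      (.of_forall fun ω => hDM ω t)
  have hF : Integrable (uncurry F) (μ.prod (ν.prod ν)) := by
    have hfst : Measure.QuasiMeasurePreserving (fun z : Ω × T × T => z.2.1) (μ.prod (ν.prod ν)) ν :=
      Measure.quasiMeasurePreserving_fst.comp Measure.quasiMeasurePreserving_snd
    have hsnd : Measure.QuasiMeasurePreserving (fun z : Ω × T × T => z.2.2) (μ.prod (ν.prod ν)) ν :=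
      Measure.quasiMeasurePreserving_snd.comp Measure.quasiMeasurePreserving_snd
    refine ((integrable_const (M ^ 2)).mul_prod (ha.mul_prod ha)).mono' ?_ (.of_forall fun z => ?_)
    · exact ((ha.1.comp_quasiMeasurePreserving hfst).mul
        (hD.comp (measurable_fst.prodMk (measurable_fst.comp measurable_snd))).aestronglyMeasurable).mul
        ((ha.1.comp_quasiMeasurePreserving hsnd).mul
        (hD.comp (measurable_fst.prodMk (measurable_snd.comp measurable_snd))).aestronglyMeasurable)
    · simp only [uncurry, F, norm_mul, Real.norm_eq_abs, abs_of_nonneg (ha0 _)]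
      have hD2 := mul_le_mul (hDM z.1 z.2.1) (hDM z.1 z.2.2) (abs_nonneg _)
        ((abs_nonneg _).trans (hDM z.1 z.2.1))
      nlinarith [mul_nonneg (ha0 z.2.1) (ha0 z.2.2)]
  have hinner : ∀ p : T × T, ∫ ω, F ω p ∂μ ≤ a p.1 * a p.2 * c := fun p => by
    have hmul : ∀ ω, F ω p = a p.1 * a p.2 * (D ω p.1 * D ω p.2) := fun ω => by ring
    simp only [hmul, integral_const_mul]
    exact mul_le_mul_of_nonneg_left
      (integral_mul_le_of_integral_sq_le (hD_slice _) (hD_slice _) (hc _) (hc _))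
      (mul_nonneg (ha0 _) (ha0 _))
  calc ∫ ω, (∫ t, a t * D ω t ∂ν) ^ 2 ∂μ = ∫ p, ∫ ω, F ω p ∂μ ∂ν.prod ν := by
        simp only [hsq]; exact integral_integral_swap hF
    _ ≤ ∫ p : T × T, a p.1 * a p.2 * c ∂ν.prod ν :=
        integral_mono hF.integral_prod_right ((ha.mul_prod ha).mul_const c) hinner
    _ = c * (∫ t, a t ∂ν) ^ 2 := by rw [integral_mul_const, integral_prod_mul, sq, mul_comm]

end WeightedIntegral

lemma norm_integral_mul_sub_integral_mul_le {α 𝕜 : Type*} {mα : MeasurableSpace α}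
    {ν : Measure α} [RCLike 𝕜] {k u v : α → 𝕜} (hu : Integrable (fun t => k t * u t) ν)
    (hv : Integrable (fun t => k t * v t) ν) :
    ‖∫ t, k t * u t ∂ν - ∫ t, k t * v t ∂ν‖ ≤ ∫ t, ‖k t‖ * ‖u t - v t‖ ∂ν := by
  rw [← integral_sub hu hv]
  refine (norm_integral_le_integral_norm _).trans_eq ?_
  simp only [← mul_sub, norm_mul]

section Deconvolution

variable {φK φε : ℝ → ℂ} {h : ℝ}

noncomputable def deconvDeriv (φK φε : ℝ → ℂ) (h : ℝ) (u : ℝ → ℂ) (x : ℝ) : ℂ :=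
  ((2 * Real.pi : ℝ) : ℂ)⁻¹ * ∫ t : ℝ, -(I * t) * exp (-(I * t * x)) * φK (t * h) * u t / φε t

lemma norm_deconvDeriv_sub_le (hint : Integrable fun t : ℝ => (t : ℂ) * φK (t * h) / φε t)
    {u v : ℝ → ℂ} (hu : AEStronglyMeasurable u) (hv : AEStronglyMeasurable v) {C : ℝ}
    (hu1 : ∀ t, ‖u t‖ ≤ C) (hv1 : ∀ t, ‖v t‖ ≤ C) (x : ℝ) :
    ‖deconvDeriv φK φε h u x - deconvDeriv φK φε h v x‖
      ≤ (2 * Real.pi)⁻¹ * ∫ t, |t| * ‖φK (t * h)‖ / ‖φε t‖ * ‖u t - v t‖ := by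
  set k : ℝ → ℂ := fun t => -(I * t) * exp (-(I * t * x)) * φK (t * h) / φε t
  have hk : Integrable k := by
    refine (hint.bdd_mul (c := 1) (f := fun t : ℝ => -I * exp (-(I * t * x))) (by fun_prop)
      (.of_forall fun t => by simp [norm_exp])).congr (.of_forall fun t => ?_)
    simp only [k]; ring
  have hku : ∀ w : ℝ → ℂ, AEStronglyMeasurable w → (∀ t, ‖w t‖ ≤ C) →
      Integrable fun t => k t * w t := fun w hw hwC =>
    (hk.bdd_mul hw (.of_forall hwC)).congr (.of_forall fun t => mul_comm _ _)
  have hfactor : ∀ w : ℝ → ℂ, deconvDeriv φK φε h w x = ((2 * Real.pi : ℝ) : ℂ)⁻¹ * ∫ t, k t * w t :=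
    fun w => by rw [deconvDeriv]; congr 2 with t; exact mul_div_right_comm _ _ _
  rw [hfactor, hfactor, ← mul_sub, norm_mul, norm_inv, norm_real, Real.norm_of_nonneg (by positivity)]
  gcongr
  refine (norm_integral_mul_sub_integral_mul_le (hku u hu hu1) (hku v hv hv1)).trans_eq ?_
  congr 1 with t
  simp [k, norm_exp]

lemma integral_iSup_norm_sq_deconvDeriv_sub_le {Ω : Type*} {mΩ : MeasurableSpace Ω}
    {μ : Measure Ω} [IsFiniteMeasure μ] (hint : Integrable fun t : ℝ => (t : ℂ) * φK (t * h) / φε t)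
    {u : Ω → ℝ → ℂ} {v : ℝ → ℂ} (hu : Measurable (uncurry u)) (hv : Measurable v) {C : ℝ}
    (hu1 : ∀ ω t, ‖u ω t‖ ≤ C) (hv1 : ∀ t, ‖v t‖ ≤ C) {c : ℝ}
    (hc : ∀ t, ∫ ω, ‖u ω t - v t‖ ^ 2 ∂μ ≤ c) :
    ∫ ω, (⨆ x, ‖deconvDeriv φK φε h (u ω) x - deconvDeriv φK φε h v x‖ ^ 2) ∂μ
      ≤ ((2 * Real.pi) ^ 2)⁻¹ * c * (∫ t, |t| * ‖φK (t * h)‖ / ‖φε t‖) ^ 2 := by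
  set a : ℝ → ℝ := fun t => |t| * ‖φK (t * h)‖ / ‖φε t‖
  set D : Ω → ℝ → ℝ := fun ω t => ‖u ω t - v t‖
  have ha : Integrable a := hint.norm.congr (.of_forall fun t => by simp [a])
  have hD : Measurable (uncurry D) := (hu.sub (hv.comp measurable_snd)).norm
  have hDC : ∀ ω t, |D ω t| ≤ 2 * C := fun ω t => by
    rw [abs_norm]; exact (norm_sub_le _ _).trans (by linarith [hu1 ω t, hv1 t])
  have hsup : ∀ ω, ⨆ x, ‖deconvDeriv φK φε h (u ω) x - deconvDeriv φK φε h v x‖ ^ 2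
      ≤ ((2 * Real.pi) ^ 2)⁻¹ * (∫ t, a t * D ω t) ^ 2 := fun ω =>
    Real.iSup_le (fun x => by
      rw [← inv_pow, ← mul_pow]
      exact pow_le_pow_left₀ (norm_nonneg _) (norm_deconvDeriv_sub_le hint
        (hu.of_uncurry_left).aestronglyMeasurable hv.aestronglyMeasurable (hu1 ω) hv1 x) 2)
      (by positivity)
  calc ∫ ω, (⨆ x, ‖deconvDeriv φK φε h (u ω) x - deconvDeriv φK φε h v x‖ ^ 2) ∂μ
      ≤ ∫ ω, ((2 * Real.pi) ^ 2)⁻¹ * (∫ t, a t * D ω t) ^ 2 ∂μ :=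
        integral_mono_of_nonneg (.of_forall fun ω => Real.iSup_nonneg fun x => by positivity)
          ((integrable_sq_integral_mul ha hD hDC).const_mul _) (.of_forall hsup)
    _ = ((2 * Real.pi) ^ 2)⁻¹ * ∫ ω, (∫ t, a t * D ω t) ^ 2 ∂μ := integral_const_mul _ _
    _ ≤ ((2 * Real.pi) ^ 2)⁻¹ * (c * (∫ t, a t) ^ 2) := by
        gcongr
        exact integral_sq_integral_mul_le ha (fun t => by positivity) hD hDC hc
    _ = ((2 * Real.pi) ^ 2)⁻¹ * c * (∫ t, a t) ^ 2 := by ring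

end Deconvolution

theorem stmt_10_general {Ω : Type*} [MeasureSpace Ω] [IsProbabilityMeasure (ℙ : Measure Ω)]
    (n : ℕ) (hn : 1 ≤ n) (Y : Fin n → Ω → ℝ)
    (hmeas : ∀ i, Measurable (Y i))
    (hindep : iIndepFun Y ℙ)
    (hident : ∀ i j, IdentDistrib (Y i) (Y j) ℙ ℙ)
    (φK : ℝ → ℂ)
    (φε : ℝ → ℂ)
    (h : ℝ)
    (hint : Integrable (fun t : ℝ => (t : ℂ) * φK (t * h) / φε t))
    (Dhat : Ω → ℝ → ℂ)
    (hDhat : ∀ ω x, Dhat ω x =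
      ((2 * Real.pi : ℝ) : ℂ)⁻¹ *
        ∫ t : ℝ, (-(Complex.I * t)) * Complex.exp (-(Complex.I * t * x)) * φK (t * h) *
          ((n : ℂ)⁻¹ * ∑ i, Complex.exp (Complex.I * t * Y i ω)) / φε t)
    (ED : ℝ → ℂ)
    (hED : ∀ x, ED x =
      ((2 * Real.pi : ℝ) : ℂ)⁻¹ *
        ∫ t : ℝ, (-(Complex.I * t)) * Complex.exp (-(Complex.I * t * x)) * φK (t * h) *
          (∫ ω, Complex.exp (Complex.I * t * Y ⟨0, hn⟩ ω) ∂ℙ) / φε t) :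
    (∫ ω, (⨆ x : ℝ, ‖Dhat ω x - ED x‖ ^ 2) ∂ℙ)
      ≤ ((2 * Real.pi) ^ 2)⁻¹ * (n : ℝ)⁻¹ * (∫ t : ℝ, |t| * ‖φK (t * h)‖ / ‖φε t‖) ^ 2 := by
  have hDhat' : Dhat = fun ω => deconvDeriv φK φε h (empiricalCharFun Y ω) := funext₂ hDhat
  have hED' : ED = deconvDeriv φK φε h fun t => ∫ ω, exp (I * t * Y ⟨0, hn⟩ ω) := funext hED
  rw [hDhat', hED']
  exact integral_iSup_norm_sq_deconvDeriv_sub_le hint (measurable_uncurry_empiricalCharFun hmeas)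
    (measurable_integral_exp_I_mul (hmeas _)) (norm_empiricalCharFun_le Y)
    (norm_integral_exp_I_mul_le _) (integral_norm_sq_empiricalCharFun_sub_le hmeas hindep hident _)

/-- For i.i.d. `Y₁, …, Y_n`, continuous nowhere-vanishing `φ_ε`,
integrable `K` with Fourier transform `φ_K`, `h > 0`, and `t ↦ t φ_K(th)/φ_ε(t)`
integrable, the derivative of the deconvolution density estimator
`D̂(x) = (2π)⁻¹ ∫ (−it) exp(−itx) φ_K(th) φ̂_Y(t)/φ_ε(t) dt` satisfies
`E[sup_x |D̂(x) − E D̂(x)|²] ≤ (2π)⁻² n⁻¹ (∫ |t| |φ_K(th)|/|φ_ε(t)| dt)²`. -/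
theorem stmt_10 {Ω : Type*} [MeasureSpace Ω] [IsProbabilityMeasure (ℙ : Measure Ω)]
    (n : ℕ) (hn : 1 ≤ n) (Y : Fin n → Ω → ℝ)
    (hmeas : ∀ i, Measurable (Y i))
    (hindep : iIndepFun Y ℙ)
    (hident : ∀ i j, IdentDistrib (Y i) (Y j) ℙ ℙ)
    (K : ℝ → ℝ) (hK : Integrable K)
    (φK : ℝ → ℂ) (hφK : ∀ t : ℝ, φK t = ∫ x : ℝ, Complex.exp (Complex.I * t * x) * K x)
    (φε : ℝ → ℂ) (hφεc : Continuous φε) (hφε0 : ∀ t, φε t ≠ 0)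
    (h : ℝ) (hh : 0 < h)
    (hint : Integrable (fun t : ℝ => (t : ℂ) * φK (t * h) / φε t))
    (Dhat : Ω → ℝ → ℂ)
    (hDhat : ∀ ω x, Dhat ω x =
      ((2 * Real.pi : ℝ) : ℂ)⁻¹ *
        ∫ t : ℝ, (-(Complex.I * t)) * Complex.exp (-(Complex.I * t * x)) * φK (t * h) *
          ((n : ℂ)⁻¹ * ∑ i, Complex.exp (Complex.I * t * Y i ω)) / φε t)
    (ED : ℝ → ℂ)
    (hED : ∀ x, ED x =
      ((2 * Real.pi : ℝ) : ℂ)⁻¹ *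
        ∫ t : ℝ, (-(Complex.I * t)) * Complex.exp (-(Complex.I * t * x)) * φK (t * h) *
          (∫ ω, Complex.exp (Complex.I * t * Y ⟨0, hn⟩ ω) ∂ℙ) / φε t) :
    (∫ ω, (⨆ x : ℝ, ‖Dhat ω x - ED x‖ ^ 2) ∂ℙ)
      ≤ ((2 * Real.pi) ^ 2)⁻¹ * (n : ℝ)⁻¹ * (∫ t : ℝ, |t| * ‖φK (t * h)‖ / ‖φε t‖) ^ 2 :=
  stmt_10_general n hn Y hmeas hindep hident φK φε h hint Dhat hDhat ED hED
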